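/- For 0<q<1 and real t with 0<t<2, setting l = t/2, m = \lfloor nl \rfloor, and any 0<\delta<\min(l,1-l), the Stieltjes–Wigert polynomial satisfies S_n(q^{-nt}u) \cdot (-1)^n (q;q)_n q^{n^2 - m^2 + nmt + (n-m)/2} (-u)^{-m} = \Theta(-q^{-nt+2m+1/2} u) + O(q^{n(l-\delta)} + q^{n(1-l-\delta)}) as n \to \infty, uniformly for u in compact subsets of \{u : 1/M \le |u| \le M\}. -/

import Mathlib

/-!
Put `x = -q^r u` with `r = -n t + 2m + 1/2`. Multiplying out the normalisation, the `k`-th term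
of `S_n(q^{-nt} u)` becomes `(q;q)_n [n, k]_q · q^{j²} x^j` with `j = k - m`, so the normalised
polynomial is the theta series `∑ q^{j²} x^j` with its `j`-th term weighted by
`c_j = (q;q)_n² / ((q;q)_{j+m} (q;q)_{n-j-m})` (and by `0` outside `-m ≤ j ≤ n - m`).
Since `(q;q)_n / (q;q)_k = ∏_{k ≤ i < n} (1 - q^{i+1}) ≥ 1 - q^{k+1}/(1-q)`, one gets
`|1 - c_j| ≤ (q^{j+m+1} + q^{n-m-j+1}) / (1-q)` for every `j ∈ ℤ`. The factors `q^{±j}` are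
absorbed by the Gaussian decay `q^{j²}` uniformly in `|r| ≤ 2` and `1/M ≤ |u| ≤ M`, leaving
the error `O(q^{m+1} + q^{n-m+1})`, and `m = ⌊nt/2⌋` turns this into the stated bound.
-/

/-- q-Pochhammer symbol (a;q)_m. -/
noncomputable def qPoch (q a : ℝ) (m : ℕ) : ℝ := ∏ j ∈ Finset.range m, (1 - a * q ^ j)

/-- Gaussian (q-)binomial coefficient. -/
noncomputable def qbinom (q : ℝ) (n k : ℕ) : ℝ :=
  qPoch q q n / (qPoch q q k * qPoch q q (n - k))

/-- Monic Stieltjes–Wigert polynomial. -/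
noncomputable def SW (q : ℝ) (n : ℕ) (x : ℝ) : ℝ :=
  (-1) ^ n * q ^ (-(n : ℝ) ^ 2 - n / 2) *
    ∑ k ∈ Finset.range (n + 1), qbinom q n k * q ^ ((k : ℝ) ^ 2 + k / 2) * (-x) ^ k

/-- Theta function at a real argument. -/
noncomputable def ThetaR (q x : ℝ) : ℝ := ∑' k : ℤ, q ^ (k ^ 2) * x ^ k

open Finset

lemma one_sub_sum_le_prod_one_sub {ι : Type*} (s : Finset ι) {f : ι → ℝ}
    (h0 : ∀ i ∈ s, 0 ≤ f i) (h1 : ∀ i ∈ s, f i ≤ 1) :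
    1 - ∑ i ∈ s, f i ≤ ∏ i ∈ s, (1 - f i) := by
  induction s using Finset.cons_induction with
  | empty => simp
  | cons a s ha ih =>
    rw [prod_cons, sum_cons]
    have hs : 0 ≤ ∑ i ∈ s, f i := sum_nonneg fun i hi => h0 i (mem_cons_of_mem hi)
    have ih := ih (fun i hi => h0 i (mem_cons_of_mem hi)) (fun i hi => h1 i (mem_cons_of_mem hi))
    have ha0 := h0 a (mem_cons_self a s)
    have ha1 := h1 a (mem_cons_self a s)
    nlinarith

section qPochhammer

variable {q : ℝ}

lemma qPoch_eq_mul_prod_Ico (a : ℝ) {k n : ℕ} (hkn : k ≤ n) :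
    qPoch q a n = qPoch q a k * ∏ j ∈ Ico k n, (1 - a * q ^ j) :=
  (prod_range_mul_prod_Ico _ hkn).symm

lemma mul_pow_mem_Ioo (hq0 : 0 < q) (hq1 : q < 1) (j : ℕ) : q * q ^ j ∈ Set.Ioo 0 1 := by
  rw [← pow_succ']
  exact ⟨pow_pos hq0 _, pow_lt_one₀ hq0.le hq1 j.succ_ne_zero⟩

lemma qPoch_pos (hq0 : 0 < q) (hq1 : q < 1) (n : ℕ) : 0 < qPoch q q n :=
  prod_pos fun j _ => sub_pos.2 (mul_pow_mem_Ioo hq0 hq1 j).2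

lemma qPoch_div_qPoch_mem_Icc (hq0 : 0 < q) (hq1 : q < 1) {k n : ℕ} (hkn : k ≤ n) :
    qPoch q q n / qPoch q q k ∈ Set.Icc (1 - q ^ (k + 1) / (1 - q)) 1 := by
  rw [qPoch_eq_mul_prod_Ico q hkn, mul_div_cancel_left₀ _ (qPoch_pos hq0 hq1 k).ne']
  have hmem := mul_pow_mem_Ioo hq0 hq1
  refine ⟨?_, prod_le_one (fun j _ => (sub_pos.2 (hmem j).2).le)
    (fun j _ => by linarith [(hmem j).1])⟩
  calc 1 - q ^ (k + 1) / (1 - q)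
      ≤ 1 - q * (q ^ k / (1 - q)) := by rw [pow_succ', mul_div_assoc]
    _ ≤ 1 - ∑ j ∈ Ico k n, q * q ^ j := by
        rw [← mul_sum]
        gcongr
        exact geom_sum_Ico_le_of_lt_one hq0.le hq1
    _ ≤ ∏ j ∈ Ico k n, (1 - q * q ^ j) :=
        one_sub_sum_le_prod_one_sub _ (fun j _ => (hmem j).1.le) (fun j _ => (hmem j).2.le)

lemma abs_one_sub_qPoch_mul_qbinom_le (hq0 : 0 < q) (hq1 : q < 1) {k n : ℕ} (hkn : k ≤ n) :
    |1 - qPoch q q n * qbinom q n k| ≤ (q ^ (k + 1) + q ^ (n - k + 1)) / (1 - q) := by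
  obtain ⟨hD1, hD2⟩ := qPoch_div_qPoch_mem_Icc hq0 hq1 hkn
  obtain ⟨hE1, hE2⟩ := qPoch_div_qPoch_mem_Icc hq0 hq1 (n.sub_le k)
  have hE0 := div_pos (qPoch_pos hq0 hq1 n) (qPoch_pos hq0 hq1 (n - k))
  have hsplit : qPoch q q n * qbinom q n k =
      qPoch q q n / qPoch q q k * (qPoch q q n / qPoch q q (n - k)) := by
    rw [qbinom]; ring
  rw [hsplit, add_div, abs_le]
  constructor <;> nlinarith

end qPochhammer

-- The normalised `SW q n` is the theta series with `j`-th term weighted by `swCoeff q n (j + m)`.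
noncomputable def swCoeff (q : ℝ) (n : ℕ) (k : ℤ) : ℝ :=
  if 0 ≤ k ∧ k ≤ n then qPoch q q n * qbinom q n k.toNat else 0

lemma abs_one_sub_swCoeff_le {q : ℝ} (hq0 : 0 < q) (hq1 : q < 1) (n : ℕ) (k : ℤ) :
    |1 - swCoeff q n k| ≤ (q ^ (k + 1) + q ^ ((n : ℤ) - k + 1)) / (1 - q) := by
  unfold swCoeff
  split_ifs with hk
  · obtain ⟨k, rfl⟩ := Int.eq_ofNat_of_zero_le hk.1
    have hkn : k ≤ n := by exact_mod_cast hk.2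
    rw [Int.toNat_natCast, show (n : ℤ) - k + 1 = ((n - k + 1 : ℕ) : ℤ) by omega,
      show (k : ℤ) + 1 = ((k + 1 : ℕ) : ℤ) by omega, zpow_natCast, zpow_natCast]
    exact abs_one_sub_qPoch_mul_qbinom_le hq0 hq1 hkn
  · have h1 := zpow_pos hq0 (k + 1)
    have h2 := zpow_pos hq0 ((n : ℤ) - k + 1)
    rw [sub_zero, abs_one, le_div_iff₀ (sub_pos.2 hq1)]
    rcases not_and_or.1 hk with hk | hk
    · linarith [one_le_zpow_of_nonpos₀ hq0 hq1.le (show k + 1 ≤ 0 by omega)]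
    · linarith [one_le_zpow_of_nonpos₀ hq0 hq1.le (show (n : ℤ) - k + 1 ≤ 0 by omega)]

lemma zpow_le_pow_natAbs {y A : ℝ} (hy : 0 < y) (h : y ≤ A) (h' : y⁻¹ ≤ A) :
    ∀ j : ℤ, y ^ j ≤ A ^ j.natAbs
  | (j : ℕ) => by simpa using pow_le_pow_left₀ hy.le h j
  | .negSucc j => by
    rw [zpow_negSucc, ← inv_pow]
    exact pow_le_pow_left₀ (inv_nonneg.2 hy.le) h' _

lemma summable_pow_sq_mul_pow {q : ℝ} (hq0 : 0 ≤ q) (hq1 : q < 1) (A : ℝ) :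
    Summable fun i : ℕ => q ^ (i ^ 2) * A ^ i := by
  have hlim : Filter.Tendsto (fun i : ℕ => ‖q ^ i * A‖) Filter.atTop (nhds 0) := by
    simpa using ((tendsto_pow_atTop_nhds_zero_of_lt_one hq0 hq1).mul_const A).norm
  refine Summable.of_norm_bounded_eventually_nat summable_geometric_two ?_
  filter_upwards [hlim.eventually (eventually_le_nhds one_half_pos)] with i hi
  rw [sq, pow_mul, ← mul_pow, norm_pow]
  exact pow_le_pow_left₀ (norm_nonneg _) hi i

noncomputable def thetaMajorant (q A : ℝ) (j : ℤ) : ℝ := q ^ (j.natAbs ^ 2) * A ^ j.natAbs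

lemma summable_thetaMajorant {q : ℝ} (hq0 : 0 ≤ q) (hq1 : q < 1) (A : ℝ) :
    Summable (thetaMajorant q A) :=
  .of_nat_of_neg (by simpa [thetaMajorant] using summable_pow_sq_mul_pow hq0 hq1 A)
    (by simpa [thetaMajorant] using summable_pow_sq_mul_pow hq0 hq1 A)

lemma zpow_sq_mul_le_thetaMajorant {q M u s : ℝ} (hq0 : 0 < q) (hq1 : q < 1) (hM : 0 < M)
    (hu1 : 1 / M ≤ |u|) (hu2 : |u| ≤ M) (hs : |s| ≤ 3) (j : ℤ) :
    q ^ (j ^ 2) * (q ^ s * |u|) ^ j ≤ thetaMajorant q (q ^ (-3 : ℝ) * M) j := by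
  have hu : 0 < |u| := lt_of_lt_of_le (by positivity) hu1
  have hqs : q ^ s ≤ q ^ (-3 : ℝ) :=
    Real.rpow_le_rpow_of_exponent_ge hq0 hq1.le (by linarith [(abs_le.1 hs).1])
  have hqs' : q ^ (-s) ≤ q ^ (-3 : ℝ) :=
    Real.rpow_le_rpow_of_exponent_ge hq0 hq1.le (by linarith [(abs_le.1 hs).2])
  have hu' : |u|⁻¹ ≤ M := inv_le_of_inv_le₀ hM (by rwa [one_div] at hu1)
  rw [thetaMajorant, ← Int.natAbs_sq j, ← Nat.cast_pow, zpow_natCast]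
  refine mul_le_mul_of_nonneg_left (zpow_le_pow_natAbs (by positivity) ?_ ?_ j) (by positivity)
  · exact mul_le_mul hqs hu2 hu.le (by positivity)
  · rw [mul_inv, ← Real.rpow_neg hq0.le]
    exact mul_le_mul hqs' hu' (by positivity) (by positivity)

lemma abs_tsum_sub_tsum_le {ι : Type*} {f g B : ι → ℝ} (hg : Summable g) (hB : Summable B)
    (h : ∀ i, |f i - g i| ≤ B i) : |∑' i, f i - ∑' i, g i| ≤ ∑' i, B i := by
  have hfg : Summable fun i => f i - g i := .of_norm_bounded hB h
  have hf : Summable f := by simpa using hfg.add hg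
  rw [← hf.tsum_sub hg]
  exact tsum_of_norm_bounded (f := fun i => f i - g i) hB.hasSum h

section ThetaComparison

variable {q M u r : ℝ}

lemma abs_zpow_sq_mul_zpow (hq0 : 0 < q) (j : ℤ) :
    |q ^ (j ^ 2) * (-(q ^ r) * u) ^ j| = q ^ (j ^ 2) * (q ^ r * |u|) ^ j := by
  rw [abs_mul, abs_zpow, abs_zpow, abs_of_pos hq0, abs_mul, abs_neg,
    abs_of_pos (Real.rpow_pos_of_pos hq0 r)]

lemma abs_swCoeff_mul_sub_le (hq0 : 0 < q) (hq1 : q < 1) (hM : 0 < M) (hu1 : 1 / M ≤ |u|)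
    (hu2 : |u| ≤ M) (hr : |r| ≤ 2) (n m : ℕ) (j : ℤ) :
    |swCoeff q n (j + m) * (q ^ (j ^ 2) * (-(q ^ r) * u) ^ j) -
        q ^ (j ^ 2) * (-(q ^ r) * u) ^ j| ≤
      (q ^ ((m : ℤ) + 1) + q ^ ((n : ℤ) - m + 1)) / (1 - q) *
        thetaMajorant q (q ^ (-3 : ℝ) * M) j := by
  set B := thetaMajorant q (q ^ (-3 : ℝ) * M) j
  set θ := q ^ (j ^ 2) * (q ^ r * |u|) ^ j
  have hq : q ≠ 0 := hq0.ne'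
  have hr' := abs_le.1 hr
  have hup : q ^ j * θ ≤ B := by
    have h := zpow_sq_mul_le_thetaMajorant hq0 hq1 hM hu1 hu2
      (abs_le.2 ⟨by linarith, by linarith⟩ : |r + 1| ≤ 3) j
    rw [Real.rpow_add_one hq, show q ^ r * q * |u| = q * (q ^ r * |u|) by ring, mul_zpow] at h
    linarith
  have hdown : q ^ (-j) * θ ≤ B := by
    have h := zpow_sq_mul_le_thetaMajorant hq0 hq1 hM hu1 hu2
      (abs_le.2 ⟨by linarith, by linarith⟩ : |r - 1| ≤ 3) j
    rw [Real.rpow_sub_one hq, show q ^ r / q * |u| = q⁻¹ * (q ^ r * |u|) by ring, mul_zpow,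
      inv_zpow'] at h
    linarith
  have hsplit_up : q ^ (j + m + 1) = q ^ ((m : ℤ) + 1) * q ^ j := by
    rw [← zpow_add₀ hq]; ring_nf
  have hsplit_down : q ^ ((n : ℤ) - (j + m) + 1) = q ^ ((n : ℤ) - m + 1) * q ^ (-j) := by
    rw [← zpow_add₀ hq]; ring_nf
  have hθ0 : 0 ≤ θ := by positivity
  calc _ = |1 - swCoeff q n (j + m)| * θ := by
        rw [show ∀ c T : ℝ, c * T - T = -((1 - c) * T) by intros; ring, abs_neg, abs_mul,
          abs_zpow_sq_mul_zpow hq0]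
    _ ≤ (q ^ (j + m + 1) + q ^ ((n : ℤ) - (j + m) + 1)) / (1 - q) * θ :=
        mul_le_mul_of_nonneg_right (abs_one_sub_swCoeff_le hq0 hq1 n (j + m)) hθ0
    _ = (q ^ ((m : ℤ) + 1) * (q ^ j * θ) + q ^ ((n : ℤ) - m + 1) * (q ^ (-j) * θ)) /
          (1 - q) := by
        rw [hsplit_up, hsplit_down]; ring
    _ ≤ (q ^ ((m : ℤ) + 1) + q ^ ((n : ℤ) - m + 1)) / (1 - q) * B := by
        have h1q : 0 < 1 - q := sub_pos.2 hq1
        rw [div_mul_eq_mul_div, add_mul]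
        gcongr

lemma abs_tsum_swCoeff_mul_sub_ThetaR_le (hq0 : 0 < q) (hq1 : q < 1) (hM : 0 < M)
    (hu1 : 1 / M ≤ |u|) (hu2 : |u| ≤ M) (hr : |r| ≤ 2) (n m : ℕ) :
    |∑' j : ℤ, swCoeff q n (j + m) * (q ^ (j ^ 2) * (-(q ^ r) * u) ^ j) -
        ThetaR q (-(q ^ r) * u)| ≤
      (q ^ ((m : ℤ) + 1) + q ^ ((n : ℤ) - m + 1)) / (1 - q) *
        ∑' j : ℤ, thetaMajorant q (q ^ (-3 : ℝ) * M) j := by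
  have hB := summable_thetaMajorant hq0.le hq1 (q ^ (-3 : ℝ) * M)
  rw [ThetaR, ← tsum_mul_left]
  refine abs_tsum_sub_tsum_le (.of_norm_bounded hB fun j => ?_) (hB.mul_left _)
    (abs_swCoeff_mul_sub_le hq0 hq1 hM hu1 hu2 hr n m)
  rw [Real.norm_eq_abs, abs_zpow_sq_mul_zpow hq0]
  exact zpow_sq_mul_le_thetaMajorant hq0 hq1 hM hu1 hu2 (by linarith [abs_nonneg r]) j

end ThetaComparison

lemma SW_term_mul_eq {q t u : ℝ} (hq0 : 0 < q) (hu : u ≠ 0) {n k : ℕ} (hkn : k ≤ n)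
    (m : ℕ) :
    q ^ (-(n : ℝ) ^ 2 - n / 2) *
        (qbinom q n k * q ^ ((k : ℝ) ^ 2 + k / 2) * (-(q ^ (-(n : ℝ) * t) * u)) ^ k) *
        (qPoch q q n *
          q ^ ((n : ℝ) ^ 2 - (m : ℝ) ^ 2 + n * (m : ℝ) * t + ((n : ℝ) - m) / 2) *
          (-u) ^ (-(m : ℤ))) =
      swCoeff q n k *
        (q ^ (((k : ℤ) - m) ^ 2) *
          (-(q ^ (-(n : ℝ) * t + 2 * (m : ℝ) + 1 / 2)) * u) ^ ((k : ℤ) - m)) := by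
  set r := -(n : ℝ) * t + 2 * (m : ℝ) + 1 / 2 with hr
  have hc : swCoeff q n k = qPoch q q n * qbinom q n k := by simp [swCoeff, hkn]
  have hpow : (-(q ^ (-(n : ℝ) * t) * u)) ^ k = q ^ (-(n : ℝ) * t * k) * (-u) ^ k := by
    rw [neg_mul_eq_mul_neg, mul_pow, ← Real.rpow_natCast, ← Real.rpow_mul hq0.le]
  have hzpow : (-(q ^ r) * u) ^ ((k : ℤ) - m) =
      q ^ (r * ((k : ℝ) - m)) * ((-u) ^ k * (-u) ^ (-(m : ℤ))) := by
    rw [neg_mul_comm, mul_zpow, ← Real.rpow_intCast, ← Real.rpow_mul hq0.le, sub_eq_add_neg,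
      zpow_add₀ (neg_ne_zero.2 hu), zpow_natCast]
    push_cast; ring_nf
  have hsq : q ^ (((k : ℤ) - m) ^ 2) = q ^ (((k : ℝ) - m) ^ 2) := by
    rw [← Real.rpow_intCast]; push_cast; rfl
  have hexp : q ^ (((k : ℝ) - m) ^ 2) * q ^ (r * ((k : ℝ) - m)) =
      q ^ (-(n : ℝ) ^ 2 - n / 2) * q ^ ((k : ℝ) ^ 2 + k / 2) * q ^ (-(n : ℝ) * t * k) *
        q ^ ((n : ℝ) ^ 2 - (m : ℝ) ^ 2 + n * (m : ℝ) * t + ((n : ℝ) - m) / 2) := by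
    simp only [← Real.rpow_add hq0, hr]; ring_nf
  rw [hc, hpow, hzpow, hsq]
  linear_combination
    (-(qPoch q q n * qbinom q n k * (-u) ^ k * (-u) ^ (-(m : ℤ)))) * hexp

lemma SW_normalized_eq_tsum {q t u : ℝ} (hq0 : 0 < q) (hu : u ≠ 0) (n m : ℕ) :
    SW q n (q ^ (-(n : ℝ) * t) * u) * ((-1) ^ n * qPoch q q n *
        q ^ ((n : ℝ) ^ 2 - (m : ℝ) ^ 2 + n * (m : ℝ) * t + ((n : ℝ) - m) / 2) *
          (-u) ^ (-(m : ℤ))) =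
      ∑' j : ℤ, swCoeff q n (j + m) *
        (q ^ (j ^ 2) * (-(q ^ (-(n : ℝ) * t + 2 * (m : ℝ) + 1 / 2)) * u) ^ j) := by
  rw [tsum_eq_sum (s := (range (n + 1)).image fun k : ℕ => (k : ℤ) - m),
    sum_image fun _ _ _ _ h => by omega]
  · simp only [sub_add_cancel]
    rw [← sum_congr rfl fun k hk =>
        SW_term_mul_eq hq0 hu (Nat.lt_add_one_iff.1 (mem_range.1 hk)) m,
      ← sum_mul, ← mul_sum, SW]
    have hsign : ((-1 : ℝ)) ^ n * (-1) ^ n = 1 := by rw [← mul_pow]; norm_num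
    generalize ∑ k ∈ range (n + 1), qbinom q n k * q ^ ((k : ℝ) ^ 2 + k / 2) *
      (-(q ^ (-(n : ℝ) * t) * u)) ^ k = S
    linear_combination (q ^ (-(n : ℝ) ^ 2 - n / 2) * S * (qPoch q q n *
      q ^ ((n : ℝ) ^ 2 - (m : ℝ) ^ 2 + n * (m : ℝ) * t + ((n : ℝ) - m) / 2) *
        (-u) ^ (-(m : ℤ)))) * hsign
  · intro j hj
    rw [swCoeff, if_neg, zero_mul]
    exact fun h => hj (mem_image.2 ⟨(j + m).toNat, mem_range.2 (by omega), by omega⟩)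

lemma zpow_le_rpow_of_le {q x : ℝ} (hq0 : 0 < q) (hq1 : q ≤ 1) {k : ℤ} (h : x ≤ k) :
    q ^ k ≤ q ^ x := by
  rw [← Real.rpow_intCast]
  exact Real.rpow_le_rpow_of_exponent_ge hq0 hq1 h

theorem stmt16_general (q t M δ : ℝ) (hq0 : 0 < q) (hq1 : q < 1) (ht0 : 0 < t)
    (hM : 1 < M) (hδ0 : 0 < δ) :
    ∃ C > 0, ∃ N₀ : ℕ, ∀ n : ℕ, N₀ ≤ n → ∀ u : ℝ, 1 / M ≤ |u| → |u| ≤ M →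
      |SW q n (q ^ (-(n : ℝ) * t) * u) * ((-1) ^ n * qPoch q q n *
            q ^ ((n : ℝ) ^ 2 - (⌊(n : ℝ) * (t / 2)⌋₊ : ℝ) ^ 2 + n * (⌊(n : ℝ) * (t / 2)⌋₊ : ℝ) * t
              + ((n : ℝ) - ⌊(n : ℝ) * (t / 2)⌋₊) / 2) * (-u) ^ (-(⌊(n : ℝ) * (t / 2)⌋₊ : ℤ))) -
          ThetaR q (-(q ^ (-(n : ℝ) * t + 2 * (⌊(n : ℝ) * (t / 2)⌋₊ : ℝ) + 1 / 2)) * u)| ≤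
        C * (q ^ ((n : ℝ) * (t / 2 - δ)) + q ^ ((n : ℝ) * (1 - t / 2 - δ))) := by
  have hM0 : 0 < M := by linarith
  set K := ∑' j : ℤ, thetaMajorant q (q ^ (-3 : ℝ) * M) j
  have hK : 0 < K := (summable_thetaMajorant hq0.le hq1 _).tsum_pos
    (fun j => by unfold thetaMajorant; positivity) 0 (by simp [thetaMajorant])
  have hC : 0 < K / (1 - q) := div_pos hK (sub_pos.2 hq1)
  refine ⟨K / (1 - q), hC, 0, fun n _ u hu1 hu2 => ?_⟩
  have hu : u ≠ 0 := abs_pos.1 (lt_of_lt_of_le (by positivity) hu1)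
  set m := ⌊(n : ℝ) * (t / 2)⌋₊
  have hm_le : (m : ℝ) ≤ n * (t / 2) := Nat.floor_le (by positivity)
  have hm_gt : n * (t / 2) < m + 1 := Nat.lt_floor_add_one _
  have hnδ : 0 ≤ (n : ℝ) * δ := by positivity
  have h1 : q ^ ((m : ℤ) + 1) ≤ q ^ ((n : ℝ) * (t / 2 - δ)) :=
    zpow_le_rpow_of_le hq0 hq1.le (by push_cast; nlinarith)
  have h2 : q ^ ((n : ℤ) - m + 1) ≤ q ^ ((n : ℝ) * (1 - t / 2 - δ)) :=
    zpow_le_rpow_of_le hq0 hq1.le (by push_cast; nlinarith)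
  rw [SW_normalized_eq_tsum hq0 hu n m]
  refine (abs_tsum_swCoeff_mul_sub_ThetaR_le hq0 hq1 hM0 hu1 hu2
    (abs_le.2 ⟨by linarith, by linarith⟩) n m).trans ?_
  rw [div_mul_comm]
  gcongr

/-- Asymptotics of the Stieltjes–Wigert polynomials in the oscillatory interval. -/
theorem stmt16 (q t M δ : ℝ) (hq0 : 0 < q) (hq1 : q < 1) (ht0 : 0 < t) (ht2 : t < 2)
    (hM : 1 < M) (hδ0 : 0 < δ) (hδ : δ < min (t / 2) (1 - t / 2)) :
    ∃ C > 0, ∃ N₀ : ℕ, ∀ n : ℕ, N₀ ≤ n → ∀ u : ℝ, 1 / M ≤ |u| → |u| ≤ M →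
      |SW q n (q ^ (-(n : ℝ) * t) * u) * ((-1) ^ n * qPoch q q n *
            q ^ ((n : ℝ) ^ 2 - (⌊(n : ℝ) * (t / 2)⌋₊ : ℝ) ^ 2 + n * (⌊(n : ℝ) * (t / 2)⌋₊ : ℝ) * t
              + ((n : ℝ) - ⌊(n : ℝ) * (t / 2)⌋₊) / 2) * (-u) ^ (-(⌊(n : ℝ) * (t / 2)⌋₊ : ℤ))) -
          ThetaR q (-(q ^ (-(n : ℝ) * t + 2 * (⌊(n : ℝ) * (t / 2)⌋₊ : ℝ) + 1 / 2)) * u)| ≤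
        C * (q ^ ((n : ℝ) * (t / 2 - δ)) + q ^ ((n : ℝ) * (1 - t / 2 - δ))) :=
  stmt16_general q t M δ hq0 hq1 ht0 hM hδ0
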